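/- Let 0 < s < π/4. Then lim_{t→∞} F(t,s)·( cos(Θ(t,s)) − cot(Θ_∞(s))·sin(Θ(t,s)) ) = 0. -/

import Mathlib

open Real Filter

/-- `ℓ(s) = arccos( (√2/2)/cos s )`. -/
noncomputable def ell (s : ℝ) : ℝ := Real.arccos ((Real.sqrt 2 / 2) / Real.cos s)

/-- `F(t,s) = cosh(t − ℓ(s)) + √(cos 2s)·sinh(t − ℓ(s))`. -/
noncomputable def Ffun (t s : ℝ) : ℝ :=
  Real.cosh (t - ell s) + Real.sqrt (Real.cos (2 * s)) * Real.sinh (t - ell s)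

/-- `Θ(t,s) = 2 sin s · sinh(t − ℓ(s)) / F(t,s) + arccos(tan s)`. -/
noncomputable def Theta (t s : ℝ) : ℝ :=
  2 * Real.sin s * Real.sinh (t - ell s) / Ffun t s + Real.arccos (Real.tan s)

/-- `Θ_∞(s) = arccos(tan s) + 2 sin s / (1 + √(cos 2s))`. -/
noncomputable def ThetaInf (s : ℝ) : ℝ :=
  Real.arccos (Real.tan s) + 2 * Real.sin s / (1 + Real.sqrt (Real.cos (2 * s)))

theorem stmt17 (s : ℝ) (hs : 0 < s) (hs' : s < π / 4) :
    Tendsto (fun t => Ffun t s *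
        (Real.cos (Theta t s) - Real.cot (ThetaInf s) * Real.sin (Theta t s)))
      atTop (nhds 0) := by
  have hpi := Real.pi_gt_three
  set a := Real.sqrt (Real.cos (2 * s)) with ha
  have hcos2 : 0 < Real.cos (2 * s) := by
    apply Real.cos_pos_of_mem_Ioo
    constructor <;> [linarith; linarith]
  have ha0 : 0 < a := Real.sqrt_pos.mpr hcos2
  have hsins : 0 < Real.sin s := Real.sin_pos_of_pos_of_lt_pi hs (by linarith)
  have ha1 : a < 1 := by
    rw [ha, show (1:ℝ) = Real.sqrt 1 from Real.sqrt_one.symm]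
    refine Real.sqrt_lt_sqrt hcos2.le ?_
    nlinarith [Real.cos_two_mul s, Real.sin_sq_add_cos_sq s]
  have h1a : (0:ℝ) < 1 + a := by linarith
  have hsins' : Real.sin s < Real.sqrt 2 / 2 := by
    have : Real.sin s < Real.sin (π/4) :=
      Real.sin_lt_sin_of_lt_of_le_pi_div_two (by linarith) (by linarith) hs'
    rwa [Real.sin_pi_div_four] at this
  -- sin ThetaInf > 0
  have htan : 0 < Real.tan s := Real.tan_pos_of_pos_of_lt_pi_div_two hs (by linarith)
  have hsqrt2 : Real.sqrt 2 < 3/2 := by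
    rw [show (3:ℝ)/2 = Real.sqrt ((3/2)^2) from (Real.sqrt_sq (by norm_num)).symm]
    apply Real.sqrt_lt_sqrt <;> norm_num
  have hTlo : 0 < ThetaInf s := by
    have := Real.arccos_nonneg (Real.tan s)
    have : 0 < 2 * Real.sin s / (1 + a) := by positivity
    unfold ThetaInf; rw [← ha]; linarith [Real.arccos_nonneg (Real.tan s)]
  have hThi : ThetaInf s < π := by
    have h1 : Real.arccos (Real.tan s) < π/2 := Real.arccos_lt_pi_div_two.mpr htan
    have h2 : 2 * Real.sin s / (1 + a) < Real.sqrt 2 := by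
      rw [div_lt_iff₀ h1a]
      nlinarith [Real.sqrt_pos.mpr (show (0:ℝ) < 2 by norm_num)]
    unfold ThetaInf; rw [← ha]; linarith
  have hsinT : 0 < Real.sin (ThetaInf s) := Real.sin_pos_of_pos_of_lt_pi hTlo hThi
  -- F positivity
  have hFpos : ∀ t, 0 < Ffun t s := by
    intro t
    have h1 := Real.cosh_pos (t - ell s)
    have h2 : Real.sinh (t - ell s) ≥ -Real.cosh (t - ell s) := by
      nlinarith [Real.exp_pos (t - ell s), Real.cosh_add_sinh (t - ell s)]
    unfold Ffun; rw [← ha]; nlinarith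
  -- key identity
  have key : ∀ t, Ffun t s * (ThetaInf s - Theta t s)
      = 2 * Real.sin s * Real.exp (-(t - ell s)) / (1 + a) := by
    intro t
    have hF : Real.cosh (t - ell s) + a * Real.sinh (t - ell s) ≠ 0 := by
      have := (hFpos t).ne'; unfold Ffun at this; rw [← ha] at this; exact this
    have hE : Real.exp (-t + ell s) = Real.cosh (t - ell s) - Real.sinh (t - ell s) := by
      rw [show -t + ell s = -(t - ell s) by ring]; exact (Real.cosh_sub_sinh _).symm
    have hE2 : Real.exp (ell s - t) = Real.cosh (t - ell s) - Real.sinh (t - ell s) := by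
      rw [show ell s - t = -(t - ell s) by ring]; exact (Real.cosh_sub_sinh _).symm
    unfold ThetaInf Theta Ffun
    rw [← ha]
    field_simp
    linear_combination (-(2 * Real.sin s)) * (Real.cosh_sub_sinh (t - ell s)).symm
  -- rewrite the function
  have hrw : ∀ t, Ffun t s *
      (Real.cos (Theta t s) - Real.cot (ThetaInf s) * Real.sin (Theta t s))
      = Ffun t s * Real.sin (ThetaInf s - Theta t s) / Real.sin (ThetaInf s) := by
    intro t
    rw [Real.cot_eq_cos_div_sin, Real.sin_sub, eq_div_iff hsinT.ne']
    field_simp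
    try ring
    try exact Or.inl trivial
  -- bound
  have hbound : ∀ t, ‖Ffun t s * Real.sin (ThetaInf s - Theta t s) / Real.sin (ThetaInf s)‖
      ≤ 2 * Real.sin s * Real.exp (-(t - ell s)) / (1 + a) / Real.sin (ThetaInf s) := by
    intro t
    rw [Real.norm_eq_abs, abs_div, abs_of_pos hsinT, div_le_div_iff_of_pos_right hsinT,
      abs_mul, abs_of_pos (hFpos t)]
    calc Ffun t s * |Real.sin (ThetaInf s - Theta t s)|
        ≤ Ffun t s * |ThetaInf s - Theta t s| :=
          mul_le_mul_of_nonneg_left Real.abs_sin_le_abs (hFpos t).le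
      _ = |Ffun t s * (ThetaInf s - Theta t s)| := by
          rw [abs_mul, abs_of_pos (hFpos t)]
      _ = 2 * Real.sin s * Real.exp (-(t - ell s)) / (1 + a) := by
          rw [key t]
          exact abs_of_nonneg (by positivity)
  -- limit of the bound
  have hg : Tendsto (fun t => 2 * Real.sin s * Real.exp (-(t - ell s)) / (1 + a)
      / Real.sin (ThetaInf s)) atTop (nhds 0) := by
    have h1 : Tendsto (fun t => Real.exp (-(t - ell s))) atTop (nhds 0) := by
      apply Real.tendsto_exp_atBot.comp
      apply tendsto_neg_atBot_iff.mpr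
      exact tendsto_atTop_add_const_right _ _ tendsto_id
    have := ((h1.const_mul (2 * Real.sin s)).div_const (1 + a)).div_const (Real.sin (ThetaInf s))
    simpa using this
  apply squeeze_zero_norm _ hg
  intro t
  rw [hrw t]
  exact hbound t
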